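/- arXiv:2112.11885 — 2 statements merged into one kernel-verified Lean document; each statement's English description precedes it below -/
import Mathlib

section
/- Let E be a finite set and consider independent random walkers: N labelled particles each evolving as an independent Markov chain on E with symmetric transition probabilities p_t(x,y) = p_t(y,x). Then for all n ∈ ℕ and all initial positions, E[∫ f dη_t^(n)] = ∫ (p_t^{⊗n} f) dη_0^(n) for all bounded f : E^n → ℝ, where η_t = Σ_i δ_{X_t(i)} and η^(n) is the n-th factorial measure. -/
variable {E : Type*} [Fintype E] [DecidableEq E]

/-- The configuration (counting measure) associated with a labelled tuple of particles. -/
def conf {n : ℕ} (y : Fin n → E) : E → ℕ :=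
  fun e => (Finset.univ.filter (fun k => y k = e)).card

/-- The generalized falling factorial polynomial `J_n(f,η) = ∫ f dη^{(n)}`: the `n`-th
factorial measure of the configuration `η` assigns mass `∏_e (η e)_{(conf y) e}` to `y`. -/
def Jfact {n : ℕ} (f : (Fin n → E) → ℝ) (η : E → ℕ) : ℝ :=
  ∑ y : Fin n → E, f y * ∏ e : E, ((η e).descFactorial (conf y e) : ℝ)

lemma psi_cast {E : Type*} {n N : ℕ} {X : Fin N → E} {y : Fin n → E}
    (ψ : ∀ e : E, {k // y k = e} ↪ {i // X i = e}) {e e' : E} (h : e = e')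
    (j : {k // y k = e}) :
    ((ψ e) j).1 = ((ψ e') ⟨j.1, h ▸ j.2⟩).1 := by subst h; rfl

/-- Injections respecting fibers ≃ product over fibers of injections. -/
def fiberEquiv {n N : ℕ} (X : Fin N → E) (y : Fin n → E) :
    {φ : Fin n ↪ Fin N // X ∘ φ = y} ≃ (∀ e : E, {k // y k = e} ↪ {i // X i = e}) where
  toFun φ e :=
    ⟨fun k => ⟨φ.1 k.1, by rw [show X (φ.1 k.1) = y k.1 from congrFun φ.2 k.1, k.2]⟩,
      fun a b h => Subtype.ext (φ.1.injective (congrArg Subtype.val h))⟩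
  invFun ψ :=
    ⟨⟨fun k => (ψ (y k) ⟨k, rfl⟩).1, by
        intro a b h
        dsimp only at h
        have ha : X ((ψ (y a) ⟨a, rfl⟩).1) = y a := (ψ (y a) ⟨a, rfl⟩).2
        have hb : X ((ψ (y b) ⟨b, rfl⟩).1) = y b := (ψ (y b) ⟨b, rfl⟩).2
        have hy : y b = y a := by rw [← ha, ← hb]; exact congrArg X h.symm
        have hc := psi_cast ψ hy (⟨b, rfl⟩ : {k // y k = y b})
        have h2 := (ψ (y a)).injective (Subtype.ext (h.trans hc))
        exact congrArg Subtype.val h2⟩,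
      funext fun k => (ψ (y k) ⟨k, rfl⟩).2⟩
  left_inv φ := Subtype.ext (Function.Embedding.ext fun k => rfl)
  right_inv ψ := by
    funext e
    apply Function.Embedding.ext
    intro k
    apply Subtype.ext
    show ((ψ (y k.1)) ⟨k.1, rfl⟩).1 = ((ψ e) k).1
    exact (psi_cast ψ k.2 ⟨k.1, rfl⟩).trans
      (congrArg (fun j => ((ψ e) j).1) (Subtype.ext rfl))

lemma card_fiber {n N : ℕ} (X : Fin N → E) (y : Fin n → E) :
    (Finset.univ.filter (fun φ : Fin n ↪ Fin N => X ∘ φ = y)).card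
      = ∏ e : E, (conf X e).descFactorial (conf y e) := by
  rw [← Fintype.card_subtype]
  rw [Fintype.card_congr (fiberEquiv X y)]
  rw [Fintype.card_pi]
  refine Finset.prod_congr rfl fun e _ => ?_
  rw [Fintype.card_embedding_eq, Fintype.card_subtype, Fintype.card_subtype]
  rfl

/-- `Jfact g (conf X)` is the sum of `g (X ∘ φ)` over injections `φ`. -/
lemma Jfact_eq_sum_emb {n N : ℕ} (X : Fin N → E) (g : (Fin n → E) → ℝ) :
    Jfact g (conf X) = ∑ φ : Fin n ↪ Fin N, g (X ∘ φ) := by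
  rw [← Finset.sum_fiberwise Finset.univ (fun φ : Fin n ↪ Fin N => X ∘ φ) (fun φ => g (X ∘ φ))]
  unfold Jfact
  refine Finset.sum_congr rfl fun y _ => ?_
  rw [Finset.sum_congr rfl (fun φ hφ => by
    rw [show X ∘ φ = y from (Finset.mem_filter.mp hφ).2]), Finset.sum_const,
    card_fiber, nsmul_eq_mul, mul_comm]
  push_cast
  ring

/-- Summing out the coordinates not hit by the injection `φ`. -/
lemma sum_emb_factor {n N : ℕ} (φ : Fin n ↪ Fin N) (w : Fin N → E → ℝ)
    (hw : ∀ i, ∑ y : E, w i y = 1) (f : (Fin n → E) → ℝ) :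
    ∑ X : Fin N → E, (∏ i : Fin N, w i (X i)) * f (X ∘ φ)
      = ∑ z : Fin n → E, (∏ k : Fin n, w (φ k) (z k)) * f z := by
  classical
  let β := {i : Fin N // i ∉ Set.range ⇑φ}
  let e1 : Fin n ⊕ β ≃ Fin N :=
    (Equiv.sumCongr (Equiv.ofInjective φ φ.injective) (Equiv.refl β)).trans
      (Equiv.sumCompl (· ∈ Set.range ⇑φ))
  have he1l : ∀ k, e1 (Sum.inl k) = φ k := fun k => by
    simp only [e1, Equiv.trans_apply, Equiv.sumCongr_apply, Sum.map_inl]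
    rfl
  have he1r : ∀ b : β, e1 (Sum.inr b) = b.1 := fun b => by
    simp only [e1, Equiv.trans_apply, Equiv.sumCongr_apply, Sum.map_inr]
    rfl
  let e : (Fin n → E) × (β → E) ≃ (Fin N → E) :=
    (Equiv.sumArrowEquivProdArrow (Fin n) β E).symm.trans
      (e1.arrowCongr (Equiv.refl E))
  rw [← Equiv.sum_comp e]
  have key : ∀ uv : (Fin n → E) × (β → E),
      (∏ i : Fin N, w i (e uv i)) * f (e uv ∘ φ)
        = ((∏ k : Fin n, w (φ k) (uv.1 k)) * f uv.1) * ∏ b : β, w b.1 (uv.2 b) := by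
    intro ⟨u, v⟩
    have hXφ : ∀ k, (e (u, v)) (φ k) = u k := by
      intro k
      show Sum.elim u v (e1.symm (φ k)) = u k
      rw [← he1l k, Equiv.symm_apply_apply]
      rfl
    have hXb : ∀ b : β, (e (u, v)) b.1 = v b := by
      intro b
      show Sum.elim u v (e1.symm b.1) = v b
      rw [← he1r b, Equiv.symm_apply_apply]
      rfl
    have hprod : (∏ i : Fin N, w i (e (u, v) i))
        = (∏ k : Fin n, w (φ k) (u k)) * ∏ b : β, w b.1 (v b) := by
      rw [← Equiv.prod_comp e1 (fun i => w i (e (u, v) i)), Fintype.prod_sum_type]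
      congr 1
      · exact Finset.prod_congr rfl fun k _ => by rw [he1l, hXφ]
      · exact Finset.prod_congr rfl fun b _ => by rw [he1r, hXb]
    have hcomp : (e (u, v)) ∘ φ = u := funext fun k => hXφ k
    rw [hprod, hcomp]; ring
  rw [Finset.sum_congr rfl fun uv _ => key uv]
  rw [Fintype.sum_prod_type]
  have hsum1 : ∑ v : β → E, ∏ b : β, w b.1 (v b) = 1 := by
    rw [← Fintype.piFinset_univ, ← Finset.prod_univ_sum]
    exact Finset.prod_eq_one fun b _ => hw b.1
  refine Finset.sum_congr rfl fun u _ => ?_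
  dsimp only
  rw [← Finset.mul_sum, hsum1, mul_one]

/-- for `N` independent random walkers on a finite set `E` with common symmetric
transition probabilities `p`, started at `X0`, and any `f : E^n → ℝ`,
`E[∫ f dη_t^{(n)}] = ∫ (p_t^{⊗n} f) dη_0^{(n)}`, where `η_t = ∑_i δ_{X_t(i)}`. -/
theorem stmt14 (p : E → E → ℝ) (hp_nonneg : ∀ x y, 0 ≤ p x y)
    (hp_row : ∀ x, ∑ y : E, p x y = 1) (hp_symm : ∀ x y, p x y = p y x)
    (N n : ℕ) (X0 : Fin N → E) (f : (Fin n → E) → ℝ) :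
    ∑ X : Fin N → E, (∏ i : Fin N, p (X0 i) (X i)) * Jfact f (conf X)
      = Jfact (fun y => ∑ z : Fin n → E, (∏ k : Fin n, p (y k) (z k)) * f z) (conf X0) := by
  rw [Jfact_eq_sum_emb X0]
  rw [Finset.sum_congr rfl fun X _ => by rw [Jfact_eq_sum_emb X f, Finset.mul_sum]]
  rw [Finset.sum_comm]
  refine Finset.sum_congr rfl fun φ _ => ?_
  rw [sum_emb_factor φ (fun i => p (X0 i)) (fun i => hp_row (X0 i)) f]
  rfl
end

section
/- Let E be a finite set with a symmetric function c : E × E → ℝ₊ (c(x,x)=0) and weights α : E → ℝ₊. Let L = L₁ + L₂ be the generator of the generalized symmetric inclusion process, with L₂f(η) = Σ_{x,y} (f(η - δ_x + δ_y) - f(η)) c(x,y) η_y η_x, and let 𝒜 be the lowering operator 𝒜f(η) = Σ_x η_x f(η - δ_x). Then 𝒜 L₂ f(η) = L₂ 𝒜 f(η) for all functions f : ℕ^E → ℝ and all η ∈ ℕ^E with finitely many particles. -/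
variable {E : Type*} [Fintype E] [DecidableEq E]

/-- The configuration obtained from `η` by moving a particle from `x` to `y`,
`η - δ_x + δ_y`. -/
def move (η : E → ℕ) (x y : E) : E → ℕ :=
  fun e => η e - (if e = x then 1 else 0) + (if e = y then 1 else 0)

/-- The interaction part of the generalized symmetric inclusion process generator:
`L₂ f(η) = ∑_{x,y} (f(η - δ_x + δ_y) - f(η)) c(x,y) η_y η_x`. -/
def L2op (c : E → E → ℝ) (f : (E → ℕ) → ℝ) (η : E → ℕ) : ℝ :=
  ∑ x : E, ∑ y : E, (f (move η x y) - f η) * c x y * (η y : ℝ) * (η x : ℝ)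

/-- The lowering operator `𝒜f(η) = ∑_x η_x f(η - δ_x)`. -/
def lowerOp (f : (E → ℕ) → ℝ) (η : E → ℕ) : ℝ :=
  ∑ x : E, (η x : ℝ) * f (fun e => η e - if e = x then 1 else 0)

/-- `η - δ_x`. -/
def dd (η : E → ℕ) (x : E) : E → ℕ := fun e => η e - if e = x then 1 else 0

lemma sum_rotate (g : E → E → E → ℝ) :
    ∑ x : E, ∑ y : E, ∑ z : E, g x y z = ∑ z : E, ∑ x : E, ∑ y : E, g x y z := by
  calc ∑ x : E, ∑ y : E, ∑ z : E, g x y z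
      = ∑ x : E, ∑ z : E, ∑ y : E, g x y z :=
        Finset.sum_congr rfl (fun x _ => Finset.sum_comm)
    _ = ∑ z : E, ∑ x : E, ∑ y : E, g x y z := Finset.sum_comm

lemma sum_antisymm (g : E → E → ℝ) (hg : ∀ x y, g x y = - g y x) :
    ∑ x : E, ∑ y : E, g x y = 0 := by
  have h : ∑ x : E, ∑ y : E, g x y = - ∑ x : E, ∑ y : E, g x y := by
    calc ∑ x : E, ∑ y : E, g x y = ∑ y : E, ∑ x : E, g x y := Finset.sum_comm
      _ = ∑ y : E, ∑ x : E, -(g y x) := by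
          exact Finset.sum_congr rfl fun y _ => Finset.sum_congr rfl fun x _ => hg x y
      _ = - ∑ x : E, ∑ y : E, g x y := by
          simp [Finset.sum_neg_distrib]
  linarith

lemma sum3_add (g h : E → E → E → ℝ) :
    ∑ z : E, ∑ x : E, ∑ y : E, (g z x y + h z x y)
      = (∑ z : E, ∑ x : E, ∑ y : E, g z x y) + ∑ z : E, ∑ x : E, ∑ y : E, h z x y := by
  simp [Finset.sum_add_distrib]

lemma key (c : E → E → ℝ) (hc_diag : ∀ x, c x x = 0)
    (f : (E → ℕ) → ℝ) (η : E → ℕ) (z x y : E) :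
    (η z : ℝ) * ((f (move (dd η z) x y) - f (dd η z)) * c x y * (dd η z y : ℝ) * (dd η z x : ℝ))
    = ((move η x y z : ℝ) * f (dd (move η x y) z) - (η z : ℝ) * f (dd η z)) * c x y *
        (η y : ℝ) * (η x : ℝ)
      + ((if z = y then c x y * (η x : ℝ) * (η y : ℝ) * (f (dd η y) - 2 * f (dd η x)) else 0)
        + (if z = x then c x y * (η x : ℝ) * (η y : ℝ) * f (dd η x) else 0)) := by
  rcases eq_or_ne x y with rfl | hxy
  · simp [hc_diag]
  · rcases eq_or_ne z x with rfl | hzx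
    · -- z = x ≠ y
      have hA : move (dd η z) z y = dd (move η z y) z := by
        funext e; simp only [move, dd]
        rcases eq_or_ne e z with rfl | h1 <;> rcases eq_or_ne e y with rfl | h2 <;>
          simp_all <;> omega
      have hmv : move η z y z = η z - 1 := by simp [move, hxy]
      have h1 : dd η z y = η y := by simp [dd, Ne.symm hxy]
      have h2 : dd η z z = η z - 1 := by simp [dd]
      have hn : ((η z - 1 : ℕ) : ℝ) * (η z : ℝ) = (η z : ℝ) * (η z : ℝ) - (η z : ℝ) := by
        cases' (η z) with n
        · simp
        · push_cast [Nat.succ_sub_one]; ring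
      rw [hA, hmv, h1, h2, if_neg hxy, if_pos rfl]
      linear_combination (-(c z y * (η y : ℝ) * f (dd η z))) * hn
    · rcases eq_or_ne z y with rfl | hzy
      · -- z = y ≠ x
        have hB : dd (move η x z) z = dd η x := by
          funext e; simp only [move, dd]
          rcases eq_or_ne e z with rfl | h1 <;> rcases eq_or_ne e x with rfl | h2 <;>
            simp_all <;> omega
        have hmv : move η x z z = η z + 1 := by
          simp [move, hzx]
        have h2 : dd η z x = η x := by simp [dd, hxy]
        have h1 : dd η z z = η z - 1 := by simp [dd]
        cases' hk : (η z) with k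
        · rw [hB, hmv, h1, h2, hk, if_pos rfl, if_neg hzx]
          norm_num
        · have hA : move (dd η z) x z = dd η x := by
            funext e; simp only [move, dd]
            rcases eq_or_ne e z with rfl | h1 <;> rcases eq_or_ne e x with rfl | h2 <;>
              simp_all <;> omega
          rw [hA, hB, hmv, h1, h2, hk, if_pos rfl, if_neg hzx]
          push_cast [Nat.succ_sub_one]; ring
      · -- z ∉ {x, y}
        have hA : move (dd η z) x y = dd (move η x y) z := by
          funext e; simp only [move, dd]
          rcases eq_or_ne e z with rfl | h1 <;> rcases eq_or_ne e x with rfl | h2 <;>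
            rcases eq_or_ne e y with rfl | h3 <;> simp_all <;> omega
        have hmv : move η x y z = η z := by simp [move, hzx, hzy]
        have h1 : dd η z y = η y := by simp [dd, Ne.symm hzy]
        have h2 : dd η z x = η x := by simp [dd, Ne.symm hzx]
        rw [hA, hmv, h1, h2, if_neg hzy, if_neg hzx]
        ring

/-- the interaction part `L₂` of the generalized symmetric inclusion process
generator commutes with the lowering operator `𝒜`: `𝒜 L₂ f (η) = L₂ 𝒜 f (η)` for all `f`
and all finite configurations `η`, given that `c` is symmetric with vanishing diagonal. -/
theorem stmt18 (c : E → E → ℝ) (hc_symm : ∀ x y, c x y = c y x)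
    (hc_nonneg : ∀ x y, 0 ≤ c x y) (hc_diag : ∀ x, c x x = 0)
    (f : (E → ℕ) → ℝ) (η : E → ℕ) :
    lowerOp (L2op c f) η = L2op c (lowerOp f) η := by
  have hL : lowerOp (L2op c f) η
      = ∑ z : E, ∑ x : E, ∑ y : E, (η z : ℝ) *
          ((f (move (dd η z) x y) - f (dd η z)) * c x y * (dd η z y : ℝ) * (dd η z x : ℝ)) := by
    show ∑ z : E, (η z : ℝ) * L2op c f (dd η z) = _
    simp only [L2op, Finset.mul_sum]
  have hR : L2op c (lowerOp f) η
      = ∑ z : E, ∑ x : E, ∑ y : E,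
          (((move η x y z : ℝ) * f (dd (move η x y) z) - (η z : ℝ) * f (dd η z)) * c x y *
            (η y : ℝ) * (η x : ℝ)) := by
    rw [← sum_rotate]
    show ∑ x : E, ∑ y : E,
        ((∑ z : E, (move η x y z : ℝ) * f (dd (move η x y) z))
          - ∑ z : E, (η z : ℝ) * f (dd η z)) * c x y * (η y : ℝ) * (η x : ℝ) = _
    refine Finset.sum_congr rfl fun x _ => Finset.sum_congr rfl fun y _ => ?_
    rw [← Finset.sum_sub_distrib, Finset.sum_mul, Finset.sum_mul, Finset.sum_mul]
  have hcorr : ∑ z : E, ∑ x : E, ∑ y : E,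
      ((if z = y then c x y * (η x : ℝ) * (η y : ℝ) * (f (dd η y) - 2 * f (dd η x)) else 0)
        + (if z = x then c x y * (η x : ℝ) * (η y : ℝ) * f (dd η x) else 0)) = 0 := by
    rw [← sum_rotate]
    have h1 : ∀ x y : E, ∑ z : E,
        ((if z = y then c x y * (η x : ℝ) * (η y : ℝ) * (f (dd η y) - 2 * f (dd η x)) else 0)
          + (if z = x then c x y * (η x : ℝ) * (η y : ℝ) * f (dd η x) else 0))
        = c x y * (η x : ℝ) * (η y : ℝ) * (f (dd η y) - f (dd η x)) := by
      intro x y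
      rw [Finset.sum_add_distrib, Finset.sum_ite_eq' Finset.univ y, Finset.sum_ite_eq' Finset.univ x]
      simp; ring
    calc ∑ x : E, ∑ y : E, ∑ z : E, _ = ∑ x : E, ∑ y : E,
          c x y * (η x : ℝ) * (η y : ℝ) * (f (dd η y) - f (dd η x)) :=
        Finset.sum_congr rfl fun x _ => Finset.sum_congr rfl fun y _ => h1 x y
      _ = 0 := sum_antisymm _ (by intro x y; rw [hc_symm x y]; ring)
  rw [hL, hR]
  have := key c hc_diag f η
  calc ∑ z : E, ∑ x : E, ∑ y : E, (η z : ℝ) *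
        ((f (move (dd η z) x y) - f (dd η z)) * c x y * (dd η z y : ℝ) * (dd η z x : ℝ))
      = ∑ z : E, ∑ x : E, ∑ y : E,
          ((((move η x y z : ℝ) * f (dd (move η x y) z) - (η z : ℝ) * f (dd η z)) * c x y *
            (η y : ℝ) * (η x : ℝ))
          + ((if z = y then c x y * (η x : ℝ) * (η y : ℝ) * (f (dd η y) - 2 * f (dd η x)) else 0)
            + (if z = x then c x y * (η x : ℝ) * (η y : ℝ) * f (dd η x) else 0))) := by
        refine Finset.sum_congr rfl fun z _ => Finset.sum_congr rfl fun x _ =>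
          Finset.sum_congr rfl fun y _ => this z x y
    _ = _ := by
        rw [sum3_add, hcorr, add_zero]
end
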